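/- Let E be an elliptic curve over a field K with char(K) ≠ 2, P ∈ E(K) a non-torsion point, and suppose the quartic polynomial δ_2^P(x) = θ_2(x) − x(P) ψ_2(x)² has a root in an extension L/K with [L:K] ≤ 2. Then E has a K-rational point of order 2 or P has a K-rational half (a point R ∈ E(K) with 2R = P). -/

import Mathlib

open WeierstrassCurve WeierstrassCurve.Affine Polynomial

universe u

open scoped Classical

local notation:max E:max "⟮" S "⟯" => Affine.Point (WeierstrassCurve.baseChange E S)

/-- A model of an isogeny defined over `K` between elliptic curves given by Weierstrass
models `E` and `E'` over `K`, of degree `d`: a compatible family of group homomorphisms on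
points over every field extension of `K`, whose kernel over any algebraically closed
extension of `K` is finite of cardinality `d`. -/
structure KIsogeny (K : Type u) [Field K] (E E' : WeierstrassCurve K) (d : ℕ) where
  hom : ∀ (L : Type u) [Field L] [Algebra K L], E⟮L⟯ →+ E'⟮L⟯
  compat : ∀ (L : Type u) [Field L] [Algebra K L] (M : Type u) [Field M] [Algebra K M]
    (f : L →ₐ[K] M) (P : E⟮L⟯),
      hom M (Point.map (W' := E) f P) = Point.map (W' := E') f (hom L P)
  card_ker : ∀ (L : Type u) [Field L] [Algebra K L] [IsAlgClosed L],
      Nat.card (AddMonoidHom.ker (hom L)) = d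


/-! A root `z` of `δ₂^P` is the x-coordinate of a point `R` with `2R = ±P`, defined over
`L(√ψ₂²(z))`. If `ψ₂²(z) = 0`, then `z` is a root of the cubic `2`-division polynomial in
an extension of degree at most `2`, so that cubic has a root in `K`: a rational `2`-torsion
point. If `ψ₂²(z)` is not a square in `L`, the conjugation of `L(√ψ₂²(z))/L` sends `R` to
`-R` and fixes `P`, so `2P = 0`. Otherwise `R ∈ E(L)`; for the involution `σ` of `L/K` with
fixed field `K`, either `σR = R` and `R` is a rational half of `±P`, or `σR - R` is a nonzero
`2`-torsion point fixed by `σ`, hence rational. -/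

section QuadraticExtension

variable {K L : Type*} [Field K] [Field L] [Algebra K L] [FiniteDimensional K L]

theorem isSeparable_of_finrank_le_two (h2 : (2 : K) ≠ 0) (hL : Module.finrank K L ≤ 2) :
    Algebra.IsSeparable K L := by
  refine ⟨fun x => ?_⟩
  have hx := IsIntegral.of_finite K x
  have hpos := minpoly.natDegree_pos hx
  have hle := (minpoly.natDegree_le x).trans hL
  rw [IsSeparable, separable_iff_derivative_ne_zero (minpoly.irreducible hx)]
  intro hd
  -- the top coefficient of the derivative of the minimal polynomial is its degree, `1` or `2`
  have hlead := congrArg (coeff · ((minpoly K x).natDegree - 1)) hd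
  simp only [coeff_derivative, Nat.sub_add_cancel hpos, (minpoly.monic hx).coeff_natDegree,
    one_mul, coeff_zero] at hlead
  interval_cases (minpoly K x).natDegree
  · norm_num at hlead
  · exact h2 (by norm_num at hlead; exact hlead)

theorem exists_involution_of_finrank_le_two (h2 : (2 : K) ≠ 0)
    (hL : Module.finrank K L ≤ 2) :
    ∃ σ : L →ₐ[K] L, σ.comp σ = AlgHom.id K L ∧
      ∀ a, σ a = a → a ∈ Set.range (algebraMap K L) := by
  rcases Nat.lt_or_ge (Module.finrank K L) 2 with hlt | hge
  · have h1 : Module.finrank K L = 1 := by have := Module.finrank_pos (R := K) (M := L); omega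
    refine ⟨AlgHom.id K L, rfl, fun a _ => ?_⟩
    have htop : (⊤ : IntermediateField K L) = ⊥ := by
      rw [← IntermediateField.finrank_eq_one_iff, IntermediateField.finrank_top', h1]
    rw [← IntermediateField.mem_bot, ← htop]
    trivial
  · have : Algebra.IsQuadraticExtension K L := ⟨le_antisymm hL hge⟩
    have := isSeparable_of_finrank_le_two h2 hL
    obtain ⟨σ, hσ⟩ := IsCyclic.exists_generator (α := Gal(L/K))
    have hσ2 : σ * σ = 1 := by
      rw [← sq, ← Algebra.IsQuadraticExtension.finrank_eq_two K L,
        ← IsGalois.card_aut_eq_finrank, pow_card_eq_one']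
    refine ⟨σ, AlgHom.ext fun a => DFunLike.congr_fun hσ2 a, fun a ha => ?_⟩
    have hstab : Subgroup.zpowers σ ≤ MulAction.stabilizer Gal(L/K) a :=
      Subgroup.zpowers_le.mpr ha
    exact (IsGalois.mem_range_algebraMap_iff_fixed a).mpr fun g => hstab (hσ g)

end QuadraticExtension

theorem exists_isRoot_of_natDegree_eq_three {K L : Type*} [Field K] [Field L] [Algebra K L]
    [FiniteDimensional K L] (hL : Module.finrank K L ≤ 2) {p : K[X]} (hp : p.natDegree = 3)
    {z : L} (hz : aeval z p = 0) : ∃ x : K, p.IsRoot x := by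
  have hint := IsIntegral.of_finite K z
  obtain ⟨q, hpq⟩ := minpoly.dvd K z hz
  have hp0 : p ≠ 0 := by rintro rfl; simp at hp
  have hq0 : q ≠ 0 := by rintro rfl; simp [hpq] at hp0
  have hdeg : (minpoly K z).natDegree + q.natDegree = 3 := by
    rw [← natDegree_mul (minpoly.ne_zero hint) hq0, ← hpq, hp]
  have hpos := minpoly.natDegree_pos hint
  have hle := (minpoly.natDegree_le z).trans hL
  -- `p = minpoly K z * q` with `deg (minpoly K z) ∈ {1, 2}`, so one of the factors is linear
  obtain ⟨f, hf1, hfp⟩ : ∃ f : K[X], f.degree = 1 ∧ f ∣ p := by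
    rcases Nat.lt_or_ge (minpoly K z).natDegree 2 with h | h
    · exact ⟨minpoly K z, degree_eq_iff_natDegree_eq_of_pos one_pos |>.mpr (by omega),
        hpq ▸ dvd_mul_right _ _⟩
    · exact ⟨q, degree_eq_iff_natDegree_eq_of_pos one_pos |>.mpr (by omega),
        hpq ▸ dvd_mul_left _ _⟩
  obtain ⟨x, hx⟩ := exists_root_of_degree_eq_one hf1
  exact ⟨x, hx.dvd hfp⟩

namespace WeierstrassCurve

section BaseChange

variable {K F : Type*} [CommRing K] [CommRing F] [Algebra K F] (E : WeierstrassCurve K)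

-- `baseChange` is a plain `def`, so the instance for `map` is not found through it.
instance [E.IsElliptic] : (E.baseChange F).IsElliptic :=
  inferInstanceAs (E.map (algebraMap K F)).IsElliptic

theorem eval_baseChange_ΨSq (n : ℤ) (z : F) :
    ((E.baseChange F).ΨSq n).eval z = aeval z (E.ΨSq n) := by
  rw [WeierstrassCurve.baseChange, map_ΨSq, eval_map_algebraMap]

theorem eval_baseChange_Φ (n : ℤ) (z : F) :
    ((E.baseChange F).Φ n).eval z = aeval z (E.Φ n) := by
  rw [WeierstrassCurve.baseChange, map_Φ, eval_map_algebraMap]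

end BaseChange

variable {F : Type*} [Field F] {W : WeierstrassCurve F}

theorem eval_ΨSq_two (x y : F) : (W.ΨSq 2).eval x =
    (y - W.toAffine.negY x y) ^ 2 - 4 * W.toAffine.polynomial.evalEval x y := by
  rw [ΨSq_two, Ψ₂Sq, evalEval_polynomial, negY, b₂, b₄, b₆]
  simp only [eval_add, eval_mul, eval_pow, eval_C, eval_X]
  ring

theorem eval_ΨSq_two_of_equation {x y : F} (h : W.toAffine.Equation x y) :
    (W.ΨSq 2).eval x = (y - W.toAffine.negY x y) ^ 2 := by
  rw [eval_ΨSq_two x y, h, mul_zero, sub_zero]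

theorem exists_nonsingular_of_sq_eq_eval_ΨSq_two [W.IsElliptic] (h2 : (2 : F) ≠ 0) {x w : F}
    (hw : w ^ 2 = (W.ΨSq 2).eval x) :
    ∃ y, ∃ _ : W.toAffine.Nonsingular x y, y - W.toAffine.negY x y = w := by
  set y := (w - W.a₁ * x - W.a₃) / 2 with hy
  have hyw : y - W.toAffine.negY x y = w := by
    rw [negY, hy]
    field_simp
    ring
  refine ⟨y, equation_iff_nonsingular.mp ?_, hyw⟩
  have h := eval_ΨSq_two (W := W) x y
  rw [hyw, ← hw] at h
  have h4 : (4 : F) * W.toAffine.polynomial.evalEval x y = 0 := by linear_combination h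
  exact (mul_eq_zero.mp h4).resolve_left (by simpa [show (4 : F) = 2 * 2 by norm_num] using h2)

theorem addX_mul_eval_ΨSq_two {x y : F} (h : W.toAffine.Equation x y)
    (hy : y ≠ W.toAffine.negY x y) :
    W.toAffine.addX x x (W.toAffine.slope x x y y) * (W.ΨSq 2).eval x = (W.Φ 2).eval x := by
  have hslope : W.toAffine.slope x x y y * (y - W.toAffine.negY x y) =
      3 * x ^ 2 + 2 * W.a₂ * x + W.a₄ - W.a₁ * y := by
    rw [slope_of_Y_ne rfl hy, div_mul_cancel₀ _ (sub_ne_zero.mpr hy)]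
  have heq := h
  rw [Affine.Equation, evalEval_polynomial] at heq
  rw [eval_ΨSq_two_of_equation h, Φ_two, addX]
  simp only [negY, b₄, b₆, b₈, eval_sub, eval_mul, eval_pow, eval_C, eval_X] at hslope ⊢
  set ℓ := W.toAffine.slope x x y y
  linear_combination (ℓ * (2 * y + W.a₁ * x + W.a₃) + 3 * x ^ 2 + 2 * W.a₂ * x + W.a₄
    - W.a₁ * y + W.a₁ * (2 * y + W.a₁ * x + W.a₃)) * hslope
    - (W.a₁ ^ 2 + 4 * W.a₂ + 8 * x) * heq

end WeierstrassCurve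

namespace WeierstrassCurve.Affine.Point

section Doubling

variable {F : Type*} [Field F] {W : WeierstrassCurve F}

theorem exists_two_torsion_of_eval_ΨSq_two_eq_zero [W.IsElliptic] (h2 : (2 : F) ≠ 0) {x : F}
    (hx : (W.ΨSq 2).eval x = 0) : ∃ T : W.toAffine.Point, T ≠ 0 ∧ 2 • T = 0 := by
  obtain ⟨y, h, hy⟩ := exists_nonsingular_of_sq_eq_eval_ΨSq_two h2 (w := 0)
    (by rw [hx, sq, mul_zero])
  exact ⟨_, some_ne_zero h, by rw [two_nsmul, add_self_of_Y_eq (sub_eq_zero.mp hy)]⟩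

theorem two_nsmul_some_eq_or_eq_neg {x y x' y' : F} (h : W.toAffine.Nonsingular x y)
    (h' : W.toAffine.Nonsingular x' y') (hψ : (W.ΨSq 2).eval x ≠ 0)
    (hΦ : (W.Φ 2).eval x = x' * (W.ΨSq 2).eval x) :
    2 • some _ _ h = some _ _ h' ∨ 2 • some _ _ h = -some _ _ h' := by
  have hy : y ≠ W.toAffine.negY x y := by
    rintro hy
    rw [eval_ΨSq_two_of_equation h.1, ← hy, sub_self, sq, zero_mul] at hψ
    exact hψ rfl
  have hx : W.toAffine.addX x x (W.toAffine.slope x x y y) = x' :=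
    mul_right_cancel₀ hψ (by rw [addX_mul_eval_ΨSq_two h.1 hy, hΦ])
  rw [two_nsmul, add_self_of_Y_ne hy, neg_some]
  simp only [some.injEq, hx, true_and]
  exact Y_eq_of_X_eq (nonsingular_add h h fun hxy => hy hxy.2).1 h'.1 hx

end Doubling

section Descent

variable {K F : Type*} [Field K] [Field F] [Algebra K F] (E : WeierstrassCurve K)

theorem map_map_ofId (σ : F →ₐ[K] F) (P : E⟮K⟯) :
    map σ (map (Algebra.ofId K F) P) = map (Algebra.ofId K F) P := by
  rw [map_map, Subsingleton.elim (σ.comp (Algebra.ofId K F)) (Algebra.ofId K F)]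

theorem exists_map_ofId_eq_of_map_eq_self {σ : F →ₐ[K] F}
    (hfix : ∀ a, σ a = a → a ∈ Set.range (algebraMap K F)) {Q : E⟮F⟯}
    (hQ : map σ Q = Q) : ∃ Q₀ : E⟮K⟯, map (Algebra.ofId K F) Q₀ = Q := by
  rcases Q with _ | ⟨x, y, h⟩
  · exact ⟨0, rfl⟩
  rw [map_some, some.injEq] at hQ
  obtain ⟨x₀, rfl⟩ := hfix x hQ.1
  obtain ⟨y₀, rfl⟩ := hfix y hQ.2
  have h₀ := (baseChange_nonsingular (W := E) (Algebra.ofId K F).injective x₀ y₀).mp h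
  exact ⟨some _ _ h₀, map_some ..⟩

theorem exists_two_torsion_or_half_of_two_nsmul_eq {σ : F →ₐ[K] F}
    (hσ : σ.comp σ = AlgHom.id K F) (hfix : ∀ a, σ a = a → a ∈ Set.range (algebraMap K F))
    {P : E⟮K⟯} {R : E⟮F⟯} (hR : 2 • R = map (Algebra.ofId K F) P) :
    (∃ T : E⟮K⟯, T ≠ 0 ∧ 2 • T = 0) ∨ ∃ R₀ : E⟮K⟯, 2 • R₀ = P := by
  by_cases hσR : map σ R = R
  · obtain ⟨R₀, rfl⟩ := exists_map_ofId_eq_of_map_eq_self E hfix hσR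
    exact .inr ⟨R₀, map_injective (f := Algebra.ofId K F) (by rwa [map_nsmul])⟩
  have hid : map (AlgHom.id K F) R = R := by rcases R with _ | _ <;> rfl
  set T := map σ R - R
  have hT0 : T ≠ 0 := sub_ne_zero.mpr hσR
  have h2T : 2 • T = 0 := by
    rw [nsmul_sub, ← map_nsmul, hR, map_map_ofId, sub_self]
  have hσT : map σ T = T := by
    rw [map_sub, map_map, hσ, hid, ← neg_sub, neg_eq_iff_add_eq_zero, ← two_nsmul, h2T]
  obtain ⟨T₀, hT₀⟩ := exists_map_ofId_eq_of_map_eq_self E hfix hσT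
  refine .inl ⟨T₀, fun h => hT0 (by rw [← hT₀, h, map_zero]), ?_⟩
  exact map_injective (f := Algebra.ofId K F) (by rw [map_nsmul, hT₀, h2T, map_zero])

theorem two_nsmul_some_eq_map_or_eq_neg_map {xP yP : K}
    (hP : (E.baseChange K).toAffine.Nonsingular xP yP) {z y : F}
    (h : (E.baseChange F).toAffine.Nonsingular z y)
    (hψ : aeval z (E.ΨSq 2) ≠ 0)
    (hΦ : aeval z (E.Φ 2) = algebraMap K F xP * aeval z (E.ΨSq 2)) :
    2 • some _ _ h = map (Algebra.ofId K F) (some _ _ hP) ∨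
      2 • some _ _ h = -map (Algebra.ofId K F) (some _ _ hP) := by
  rw [map_some]
  refine two_nsmul_some_eq_or_eq_neg h _ (by rwa [eval_baseChange_ΨSq]) ?_
  rw [eval_baseChange_Φ, eval_baseChange_ΨSq, hΦ]
  rfl

theorem map_some_eq_neg (h2 : (2 : F) ≠ 0) {σ : F →ₐ[K] F} {x y : F}
    (h : (E.baseChange F).toAffine.Nonsingular x y) (hx : σ x = x)
    (hy : σ (y - (E.baseChange F).toAffine.negY x y) =
      -(y - (E.baseChange F).toAffine.negY x y)) :
    map σ (some _ _ h) = -some _ _ h := by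
  rw [map_some, neg_some, some.injEq]
  refine ⟨hx, ?_⟩
  simp only [negY, WeierstrassCurve.baseChange, map_a₁, map_a₃, map_sub, map_neg, map_mul,
    AlgHom.commutes, hx] at hy ⊢
  exact mul_left_cancel₀ h2 (by linear_combination hy)

theorem two_nsmul_eq_zero_of_map_eq_neg (σ : F →ₐ[K] F) {P : E⟮K⟯} {R : E⟮F⟯}
    (hσR : map σ R = -R)
    (hR : 2 • R = map (Algebra.ofId K F) P ∨ 2 • R = -map (Algebra.ofId K F) P) :
    2 • P = 0 := by
  obtain ⟨R', hσR', hR'⟩ : ∃ R' : E⟮F⟯, map σ R' = -R' ∧ 2 • R' = map (Algebra.ofId K F) P := by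
    rcases hR with hR | hR
    · exact ⟨R, hσR, hR⟩
    · exact ⟨-R, by rw [map_neg, hσR], by rw [smul_neg, hR, neg_neg]⟩
  have hσP : map σ (map (Algebra.ofId K F) P) = -map (Algebra.ofId K F) P := by
    rw [← hR', map_nsmul, hσR', smul_neg]
  have hneg := (map_map_ofId E σ P).symm.trans hσP
  refine map_injective (f := Algebra.ofId K F) ?_
  rw [map_nsmul, map_zero, two_nsmul]
  nth_rw 1 [hneg]
  exact neg_add_cancel _

end Descent

end WeierstrassCurve.Affine.Point

section HalvingOverQuadraticExtension

variable {K L : Type*} [Field K] [Field L] [Algebra K L] (E : WeierstrassCurve K) [E.IsElliptic]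
  {xP yP : K} (hP : (E.baseChange K).toAffine.Nonsingular xP yP) {z : L}

theorem exists_two_torsion_of_aeval_ΨSq_two_eq_zero [FiniteDimensional K L] (h2 : (2 : K) ≠ 0)
    (hL : Module.finrank K L ≤ 2) (hψ : aeval z (E.ΨSq 2) = 0) :
    ∃ T : E⟮K⟯, T ≠ 0 ∧ 2 • T = 0 := by
  obtain ⟨x, hx⟩ := exists_isRoot_of_natDegree_eq_three hL
    (E.natDegree_Ψ₂Sq (by simpa [show (4 : K) = 2 * 2 by norm_num] using h2)) (E.ΨSq_two ▸ hψ)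
  refine Point.exists_two_torsion_of_eval_ΨSq_two_eq_zero h2 (x := x) ?_
  rw [eval_baseChange_ΨSq, ΨSq_two, coe_aeval_eq_eval]
  exact hx

theorem exists_two_torsion_or_half_of_isSquare [FiniteDimensional K L] (h2 : (2 : K) ≠ 0)
    (hL : Module.finrank K L ≤ 2) (hψ : aeval z (E.ΨSq 2) ≠ 0)
    (hΦ : aeval z (E.Φ 2) = algebraMap K L xP * aeval z (E.ΨSq 2))
    (hsq : IsSquare (aeval z (E.ΨSq 2))) :
    (∃ T : E⟮K⟯, T ≠ 0 ∧ 2 • T = 0) ∨ ∃ R : E⟮K⟯, 2 • R = Point.some _ _ hP := by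
  obtain ⟨w, hw⟩ := hsq
  have h2L : (2 : L) ≠ 0 := by simpa only [map_ofNat] using (map_ne_zero (algebraMap K L)).mpr h2
  obtain ⟨y, h, -⟩ := exists_nonsingular_of_sq_eq_eval_ΨSq_two (W := E.baseChange L) h2L
    (x := z) (w := w) (by rw [eval_baseChange_ΨSq, hw, sq])
  obtain ⟨R, hR⟩ : ∃ R : E⟮L⟯, 2 • R = Point.map (Algebra.ofId K L) (Point.some _ _ hP) := by
    rcases Point.two_nsmul_some_eq_map_or_eq_neg_map E hP h hψ hΦ with hR | hR
    · exact ⟨_, hR⟩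
    · exact ⟨-_, by rw [smul_neg, hR, neg_neg]⟩
  obtain ⟨σ, hσ, hfix⟩ := exists_involution_of_finrank_le_two h2 hL
  exact Point.exists_two_torsion_or_half_of_two_nsmul_eq E hσ hfix hR

theorem two_nsmul_eq_zero_of_not_isSquare (h2 : (2 : K) ≠ 0) (hψ : aeval z (E.ΨSq 2) ≠ 0)
    (hΦ : aeval z (E.Φ 2) = algebraMap K L xP * aeval z (E.ΨSq 2))
    (hsq : ¬IsSquare (aeval z (E.ΨSq 2))) : 2 • Point.some _ _ hP = 0 := by
  set c := aeval z (E.ΨSq 2)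
  have : Fact (Irreducible (X ^ 2 - C c)) :=
    ⟨X_pow_sub_C_irreducible_of_prime Nat.prime_two fun w hw => hsq ⟨w, by rw [← hw, sq]⟩⟩
  let M := AdjoinRoot (X ^ 2 - C c)
  let w : M := AdjoinRoot.root (X ^ 2 - C c)
  have hw : w ^ 2 = algebraMap L M c := by
    have h := AdjoinRoot.aeval_eq (f := X ^ 2 - C c) (X ^ 2 - C c)
    rwa [AdjoinRoot.mk_self, map_sub, map_pow, aeval_X, aeval_C, sub_eq_zero] at h
  have h2M : (2 : M) ≠ 0 := by simpa only [map_ofNat] using (map_ne_zero (algebraMap K M)).mpr h2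
  have haeval (p : K[X]) : aeval (algebraMap L M z) p = algebraMap L M (aeval z p) :=
    aeval_algebraMap_apply M z p
  obtain ⟨y, h, hyw⟩ := exists_nonsingular_of_sq_eq_eval_ΨSq_two (W := E.baseChange M) h2M
    (x := algebraMap L M z) (w := w) (by rw [eval_baseChange_ΨSq, haeval, hw])
  have hconj : aeval (-w) (X ^ 2 - C c) = 0 := by
    rw [map_sub, map_pow, aeval_X, aeval_C, neg_sq, hw, sub_self]
  -- the conjugation `√c ↦ -√c` of `M = L(√c)` over `L`
  let τ := AdjoinRoot.liftAlgHom _ (Algebra.ofId L M) (-w) hconj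
  refine Point.two_nsmul_eq_zero_of_map_eq_neg E (τ.restrictScalars K) ?_
    (Point.two_nsmul_some_eq_map_or_eq_neg_map E hP h ?_ ?_)
  · refine Point.map_some_eq_neg E h2M h (τ.commutes z) ?_
    rw [hyw]
    exact AdjoinRoot.liftAlgHom_root _ _ _ hconj
  · rwa [haeval, _root_.map_ne_zero]
  · rw [haeval, haeval, hΦ, map_mul, IsScalarTower.algebraMap_apply K L M]

end HalvingOverQuadraticExtension

theorem stmt13_general (K : Type u) [Field K] (hchar : ringChar K ≠ 2)
    (E : WeierstrassCurve K) [E.IsElliptic]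
    (xP yP : K) (hP : (E.baseChange K).toAffine.Nonsingular xP yP)
    (P : E⟮K⟯) (hPeq : P = Point.some _ _ hP)
    (L : Type u) [Field L] [Algebra K L] [FiniteDimensional K L]
    (hdeg : Module.finrank K L ≤ 2)
    (z : L) (hz : aeval z (E.Φ 2 - C xP * E.ΨSq 2) = 0) :
    (∃ T : E⟮K⟯, T ≠ 0 ∧ 2 • T = 0) ∨ (∃ R : E⟮K⟯, 2 • R = P) := by
  subst hPeq
  have h2 : (2 : K) ≠ 0 := Ring.two_ne_zero hchar
  have hΦ : aeval z (E.Φ 2) = algebraMap K L xP * aeval z (E.ΨSq 2) := by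
    rwa [map_sub, map_mul, aeval_C, sub_eq_zero] at hz
  by_cases hψ : aeval z (E.ΨSq 2) = 0
  · exact .inl (exists_two_torsion_of_aeval_ΨSq_two_eq_zero E h2 hdeg hψ)
  by_cases hsq : IsSquare (aeval z (E.ΨSq 2))
  · exact exists_two_torsion_or_half_of_isSquare E hP h2 hdeg hψ hΦ hsq
  · exact .inl ⟨_, Point.some_ne_zero hP, two_nsmul_eq_zero_of_not_isSquare E hP h2 hψ hΦ hsq⟩

/-- If the quartic `δ_2^P` has a root in an extension of degree at most `2`, then `E` has a
`K`-rational point of order `2` or `P` has a `K`-rational half. -/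
theorem stmt13 (K : Type u) [Field K] (hchar : ringChar K ≠ 2)
    (E : WeierstrassCurve K) [E.IsElliptic]
    (xP yP : K) (hP : (E.baseChange K).toAffine.Nonsingular xP yP)
    (P : E⟮K⟯) (hPeq : P = Point.some _ _ hP)
    (hPtor : ∀ n : ℕ, n ≠ 0 → n • P ≠ 0)
    (L : Type u) [Field L] [Algebra K L] [FiniteDimensional K L]
    (hdeg : Module.finrank K L ≤ 2)
    (z : L) (hz : aeval z (E.Φ 2 - C xP * E.ΨSq 2) = 0) :
    (∃ T : E⟮K⟯, T ≠ 0 ∧ 2 • T = 0) ∨ (∃ R : E⟮K⟯, 2 • R = P) :=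
  stmt13_general K hchar E xP yP hP P hPeq L hdeg z hz
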